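/- Let q>0, λ>0 and g ∈ L^∞(Ω). If u and v are both weak solutions of the stationary problem (S): u + λ((−Δ)^s u − u^{-q}) = g in Ω, u = 0 in ℝⁿ∖Ω, then u = v a.e. in ℝⁿ. -/

import Mathlib

/-!
Test both equations with `w = u - v` and subtract: `∫_Ω w² + λ E(w,w) = λ ∫_Ω (u^{-q} - v^{-q}) w`.
The left side is nonnegative because `C_n^s > 0`, the right side is nonpositive because
`t ↦ t^{-q}` is decreasing on `(0,∞)` and `u, v > 0` a.e. in `Ω`. Hence `∫_Ω w² = 0`, and outside
`Ω` both solutions vanish.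
-/

open MeasureTheory Set Filter
open scoped ENNReal RealInnerProductSpace

noncomputable section

/-- Euclidean space ℝⁿ. -/
abbrev Eu (n : ℕ) : Type := EuclideanSpace ℝ (Fin n)

/-- The normalizing constant `C_n^s = π^{-n/2} 2^{2s-1} s Γ((n+2s)/2)/Γ(1-s)`. -/
def Cns (n : ℕ) (s : ℝ) : ℝ :=
  Real.pi ^ (-(n : ℝ) / 2) * (2 : ℝ) ^ (2 * s - 1) * s *
    Real.Gamma (((n : ℝ) + 2 * s) / 2) / Real.Gamma (1 - s)

/-- `Q = ℝ²ⁿ ∖ ((ℝⁿ∖Ω) × (ℝⁿ∖Ω))`. -/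
def Qset {n : ℕ} (Ω : Set (Eu n)) : Set (Eu n × Eu n) := (Ωᶜ ×ˢ Ωᶜ)ᶜ

/-- The Gagliardo kernel `(u(x)-u(y))(v(x)-v(y))/|x-y|^{n+2s}`. -/
def gKer {n : ℕ} (s : ℝ) (u v : Eu n → ℝ) (p : Eu n × Eu n) : ℝ :=
  (u p.1 - u p.2) * (v p.1 - v p.2) / dist p.1 p.2 ^ ((n : ℝ) + 2 * s)

/-- The bilinear form `E(u,v) = C_n^s ∫∫_Q (u(x)-u(y))(v(x)-v(y))/|x-y|^{n+2s}`. -/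
def bilinE {n : ℕ} (s : ℝ) (Ω : Set (Eu n)) (u v : Eu n → ℝ) : ℝ :=
  Cns n s * ∫ p in Qset Ω, gKer s u v p

/-- `‖u‖²_{X₀(Ω)}`. -/
def normX0sq {n : ℕ} (s : ℝ) (Ω : Set (Eu n)) (u : Eu n → ℝ) : ℝ := bilinE s Ω u u

/-- `‖u‖_{X₀(Ω)}`. -/
def normX0 {n : ℕ} (s : ℝ) (Ω : Set (Eu n)) (u : Eu n → ℝ) : ℝ :=
  Real.sqrt (normX0sq s Ω u)

/-- `u ∈ X₀(Ω)`: measurable, vanishing a.e. outside `Ω`, square integrable on `Ω`,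
with finite Gagliardo energy. -/
def MemX0 {n : ℕ} (s : ℝ) (Ω : Set (Eu n)) (u : Eu n → ℝ) : Prop :=
  Measurable u ∧ (∀ᵐ x : Eu n, x ∉ Ω → u x = 0) ∧
    MemLp u 2 (volume.restrict Ω) ∧ IntegrableOn (gKer s u u) (Qset Ω)

/-- `Ω` has `C²` boundary: near every boundary point, `Ω` is given by a `C²` local
defining function with nonvanishing differential. -/
def HasC2Boundary {n : ℕ} (Ω : Set (Eu n)) : Prop :=
  ∀ x ∈ frontier Ω, ∃ U : Set (Eu n), IsOpen U ∧ x ∈ U ∧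
    ∃ g : Eu n → ℝ, ContDiff ℝ 2 g ∧ (∀ y ∈ U, (y ∈ Ω ↔ g y < 0)) ∧
      ∀ y ∈ U ∩ frontier Ω, fderiv ℝ g y ≠ 0

/-- Bounded domain (open, connected, nonempty) with `C²` boundary. -/
def GoodDomain {n : ℕ} (Ω : Set (Eu n)) : Prop :=
  IsOpen Ω ∧ Bornology.IsBounded Ω ∧ IsConnected Ω ∧ HasC2Boundary Ω

/-- `δ(x) = dist(x, ∂Ω)`. -/
def bdry {n : ℕ} (Ω : Set (Eu n)) (x : Eu n) : ℝ := Metric.infDist x (frontier Ω)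

/-- `g ∈ L^∞(Ω)`. -/
def MemLinfty {n : ℕ} (Ω : Set (Eu n)) (g : Eu n → ℝ) : Prop :=
  Measurable g ∧ ∃ M : ℝ, ∀ᵐ x ∂(volume.restrict Ω), |g x| ≤ M

/-- `ess inf_K u > 0` for every compact `K ⊆ Ω`. -/
def PosOnCompacts {n : ℕ} (Ω : Set (Eu n)) (u : Eu n → ℝ) : Prop :=
  ∀ K : Set (Eu n), IsCompact K → K ⊆ Ω →
    ∃ c : ℝ, 0 < c ∧ ∀ᵐ x ∂(volume.restrict K), c ≤ u x

/-- The conical shell `𝒞` (depending on `q`, `s` and a fixed `r > diam Ω`). -/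
def InCone {n : ℕ} (s q r : ℝ) (Ω : Set (Eu n)) (v : Eu n → ℝ) : Prop :=
  MemLinfty Ω v ∧ ∃ k₁ k₂ : ℝ, 0 < k₁ ∧ 0 < k₂ ∧
    ∀ᵐ x ∂(volume.restrict Ω),
      (q < 1 → k₁ * bdry Ω x ^ s ≤ v x ∧ v x ≤ k₂ * bdry Ω x ^ s) ∧
      (q = 1 →
        k₁ * (bdry Ω x ^ s * Real.sqrt (Real.log (r / bdry Ω x ^ s))) ≤ v x ∧
        v x ≤ k₂ * (bdry Ω x ^ s * Real.sqrt (Real.log (r / bdry Ω x ^ s)))) ∧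
      (1 < q →
        k₁ * bdry Ω x ^ (2 * s / (q + 1)) ≤ v x ∧
        v x ≤ k₂ * bdry Ω x ^ (2 * s / (q + 1)))

/-- Weak solution of `(S)`: `u + λ((−Δ)^s u − u^{-q}) = g` in `Ω`, `u = 0` outside `Ω`. -/
def IsWeakSolS {n : ℕ} (s q lam : ℝ) (Ω : Set (Eu n)) (g u : Eu n → ℝ) : Prop :=
  MemX0 s Ω u ∧ PosOnCompacts Ω u ∧
    ∀ φ : Eu n → ℝ, MemX0 s Ω φ →
      IntegrableOn (fun x => u x ^ (-q) * φ x) Ω ∧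
      (∫ x in Ω, u x * φ x) + lam * (bilinE s Ω u φ - ∫ x in Ω, u x ^ (-q) * φ x) =
        ∫ x in Ω, g x * φ x

/-- `u ∈ C^α(ℝⁿ)`. -/
def HolderCα {n : ℕ} (α : ℝ) (u : Eu n → ℝ) : Prop :=
  ∃ C : ℝ, 0 < C ∧ ∀ x y : Eu n, |u x - u y| ≤ C * dist x y ^ α

/-- Hölder regularity with exponent `α = s` if `q<1`, `α = s-ε` (any small `ε>0`) if `q=1`,
and `α = 2s/(q+1)` if `q>1`. -/
def RegAlpha {n : ℕ} (s q : ℝ) (u : Eu n → ℝ) : Prop :=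
  (q < 1 → HolderCα s u) ∧
  (q = 1 → ∃ ε₀ : ℝ, 0 < ε₀ ∧ ∀ ε : ℝ, 0 < ε → ε < ε₀ → HolderCα (s - ε) u) ∧
  (1 < q → HolderCα (2 * s / (q + 1)) u)

section GagliardoKernel

variable {n : ℕ} (s : ℝ)

lemma gKer_self_nonneg (u : Eu n → ℝ) (p : Eu n × Eu n) : 0 ≤ gKer s u u p :=
  div_nonneg (mul_self_nonneg _) (Real.rpow_nonneg dist_nonneg _)

lemma gKer_sub_left (u v w : Eu n → ℝ) (p : Eu n × Eu n) :
    gKer s (u - v) w p = gKer s u w p - gKer s v w p := by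
  simp only [gKer, Pi.sub_apply, ← sub_div]
  ring

lemma abs_gKer_le (u w : Eu n → ℝ) (p : Eu n × Eu n) :
    |gKer s u w p| ≤ gKer s u u p + gKer s w w p := by
  have hd : 0 ≤ dist p.1 p.2 ^ ((n : ℝ) + 2 * s) := Real.rpow_nonneg dist_nonneg _
  simp only [gKer, abs_div, abs_of_nonneg hd, ← add_div]
  gcongr
  rw [abs_mul]
  nlinarith [sq_nonneg (|u p.1 - u p.2| - |w p.1 - w p.2|), sq_abs (u p.1 - u p.2),
    sq_abs (w p.1 - w p.2)]

lemma gKer_sub_self_le (u v : Eu n → ℝ) (p : Eu n × Eu n) :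
    gKer s (u - v) (u - v) p ≤ 2 * gKer s u u p + 2 * gKer s v v p := by
  have hd : 0 ≤ dist p.1 p.2 ^ ((n : ℝ) + 2 * s) := Real.rpow_nonneg dist_nonneg _
  simp only [gKer, Pi.sub_apply, mul_div_assoc', ← add_div]
  gcongr
  nlinarith [sq_nonneg (u p.1 - u p.2 + (v p.1 - v p.2))]

variable {s}

lemma measurable_gKer {u w : Eu n → ℝ} (hu : Measurable u) (hw : Measurable w) :
    Measurable (gKer s u w) := by
  unfold gKer
  fun_prop

lemma integrableOn_gKer {S : Set (Eu n × Eu n)} {u w : Eu n → ℝ}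
    (hu : Measurable u) (hw : Measurable w)
    (huu : IntegrableOn (gKer s u u) S) (hww : IntegrableOn (gKer s w w) S) :
    IntegrableOn (gKer s u w) S :=
  (huu.add hww).mono' (measurable_gKer hu hw).aestronglyMeasurable
    (ae_of_all _ fun p => abs_gKer_le s u w p)

lemma integrableOn_gKer_sub_self {S : Set (Eu n × Eu n)} {u v : Eu n → ℝ}
    (hu : Measurable u) (hv : Measurable v)
    (huu : IntegrableOn (gKer s u u) S) (hvv : IntegrableOn (gKer s v v) S) :
    IntegrableOn (gKer s (u - v) (u - v)) S :=
  ((huu.const_mul 2).add (hvv.const_mul 2)).mono'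
    (measurable_gKer (hu.sub hv) (hu.sub hv)).aestronglyMeasurable
    (ae_of_all _ fun p => by
      rw [Real.norm_of_nonneg (gKer_self_nonneg s _ p)]
      exact gKer_sub_self_le s u v p)

end GagliardoKernel

lemma Cns_pos {n : ℕ} {s : ℝ} (hs0 : 0 < s) (hs1 : s < 1) : 0 < Cns n s := by
  unfold Cns
  have := Real.Gamma_pos_of_pos (show 0 < ((n : ℝ) + 2 * s) / 2 by positivity)
  have := Real.Gamma_pos_of_pos (show 0 < 1 - s by linarith)
  positivity

section FractionalSobolev

variable {n : ℕ} {s : ℝ} {Ω : Set (Eu n)} {u v w : Eu n → ℝ}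

lemma MemX0.sub (hu : MemX0 s Ω u) (hv : MemX0 s Ω v) : MemX0 s Ω (u - v) := by
  obtain ⟨humeas, huzero, huL2, huG⟩ := hu
  obtain ⟨hvmeas, hvzero, hvL2, hvG⟩ := hv
  refine ⟨humeas.sub hvmeas, ?_, huL2.sub hvL2,
    integrableOn_gKer_sub_self humeas hvmeas huG hvG⟩
  filter_upwards [huzero, hvzero] with x hux hvx hx
  simp [hux hx, hvx hx]

lemma bilinE_sub_left (hu : MemX0 s Ω u) (hv : MemX0 s Ω v) (hw : MemX0 s Ω w) :
    bilinE s Ω (u - v) w = bilinE s Ω u w - bilinE s Ω v w := by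
  have huw := integrableOn_gKer hu.1 hw.1 hu.2.2.2 hw.2.2.2
  have hvw := integrableOn_gKer hv.1 hw.1 hv.2.2.2 hw.2.2.2
  simp only [bilinE, ← mul_sub, ← integral_sub huw hvw, gKer_sub_left]

lemma bilinE_self_nonneg (hs0 : 0 < s) (hs1 : s < 1) (u : Eu n → ℝ) :
    0 ≤ bilinE s Ω u u :=
  mul_nonneg (Cns_pos hs0 hs1).le (integral_nonneg fun p => gKer_self_nonneg s u p)

end FractionalSobolev

-- Each point of `Ω` has a compact neighbourhood in `Ω` on which `u` is a.e. bounded below by a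
-- positive constant, and a locally null set is null.
lemma PosOnCompacts.ae_pos {n : ℕ} {Ω : Set (Eu n)} {u : Eu n → ℝ} (hΩ : IsOpen Ω)
    (hu : PosOnCompacts Ω u) : ∀ᵐ x ∂(volume.restrict Ω), 0 < u x := by
  rw [ae_restrict_iff' hΩ.measurableSet, ae_iff]
  refine measure_null_of_locally_null _ fun x hx => ?_
  obtain ⟨K, hK, hxK, hKΩ⟩ := exists_compact_subset hΩ (Classical.not_imp.mp hx).1
  obtain ⟨c, hc, hcu⟩ := hu K hK hKΩ
  rw [ae_restrict_iff' hK.measurableSet, ae_iff] at hcu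
  refine ⟨_, inter_mem_nhdsWithin _ (mem_interior_iff_mem_nhds.mp hxK), measure_mono_null ?_ hcu⟩
  rintro y ⟨hy, hyK⟩ hcy
  exact hy fun _ => hc.trans_le (hcy hyK)

lemma rpow_neg_sub_mul_sub_nonpos {a b q : ℝ} (ha : 0 < a) (hb : 0 < b) (hq : 0 ≤ q) :
    (a ^ (-q) - b ^ (-q)) * (a - b) ≤ 0 := by
  rcases le_total a b with hab | hab
  · exact mul_nonpos_of_nonneg_of_nonpos
      (sub_nonneg.mpr (Real.rpow_le_rpow_of_nonpos ha hab (neg_nonpos.mpr hq)))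
      (sub_nonpos.mpr hab)
  · exact mul_nonpos_of_nonpos_of_nonneg
      (sub_nonpos.mpr (Real.rpow_le_rpow_of_nonpos hb hab (neg_nonpos.mpr hq)))
      (sub_nonneg.mpr hab)

lemma IsWeakSolS.sub_energy_eq_zero {n : ℕ} {s q lam : ℝ} {Ω : Set (Eu n)} {g u v : Eu n → ℝ}
    (hu : IsWeakSolS s q lam Ω g u) (hv : IsWeakSolS s q lam Ω g v) :
    (∫ x in Ω, (u - v) x * (u - v) x) +
      lam * (bilinE s Ω (u - v) (u - v) - ∫ x in Ω, (u x ^ (-q) - v x ^ (-q)) * (u - v) x)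
      = 0 := by
  have hw := hu.1.sub hv.1
  obtain ⟨hIu, hEqu⟩ := hu.2.2 _ hw
  obtain ⟨hIv, hEqv⟩ := hv.2.2 _ hw
  have hL2 : ∫ x in Ω, (u - v) x * (u - v) x
      = (∫ x in Ω, u x * (u - v) x) - ∫ x in Ω, v x * (u - v) x := by
    rw [← integral_sub (f := fun x => u x * (u - v) x) (g := fun x => v x * (u - v) x)
      (hu.1.2.2.1.integrable_mul hw.2.2.1) (hv.1.2.2.1.integrable_mul hw.2.2.1)]
    simp only [Pi.sub_apply, sub_mul]
  have hsing : ∫ x in Ω, (u x ^ (-q) - v x ^ (-q)) * (u - v) x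
      = (∫ x in Ω, u x ^ (-q) * (u - v) x) - ∫ x in Ω, v x ^ (-q) * (u - v) x := by
    rw [← integral_sub hIu hIv]
    simp only [sub_mul]
  rw [hL2, hsing, bilinE_sub_left hu.1 hv.1 hw]
  linear_combination hEqu - hEqv

theorem statement_1_general
    {n : ℕ} {s : ℝ} (hs0 : 0 < s) (hs1 : s < 1)
    {Ω : Set (Eu n)} (hΩ : GoodDomain Ω)
    {q lam : ℝ} (hq : 0 < q) (hlam : 0 < lam)
    {g : Eu n → ℝ}
    {u v : Eu n → ℝ}
    (hu : IsWeakSolS s q lam Ω g u) (hv : IsWeakSolS s q lam Ω g v) :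
    ∀ᵐ x : Eu n, u x = v x := by
  obtain ⟨hΩopen, -, -, -⟩ := hΩ
  have hw := hu.1.sub hv.1
  have hL2 : 0 ≤ ∫ x in Ω, (u - v) x * (u - v) x := integral_nonneg fun x => mul_self_nonneg _
  have hE : 0 ≤ lam * bilinE s Ω (u - v) (u - v) :=
    mul_nonneg hlam.le (bilinE_self_nonneg hs0 hs1 _)
  have hsing : lam * ∫ x in Ω, (u x ^ (-q) - v x ^ (-q)) * (u - v) x ≤ 0 := by
    refine mul_nonpos_of_nonneg_of_nonpos hlam.le (integral_nonpos_of_ae ?_)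
    filter_upwards [hu.2.1.ae_pos hΩopen, hv.2.1.ae_pos hΩopen] with x hux hvx
    exact rpow_neg_sub_mul_sub_nonpos hux hvx hq.le
  have hL2_zero : ∫ x in Ω, (u - v) x * (u - v) x = 0 := by
    linarith [hu.sub_energy_eq_zero hv]
  have hsq_zero := (integral_eq_zero_iff_of_nonneg (fun x => mul_self_nonneg ((u - v) x))
    (hw.2.2.1.integrable_mul hw.2.2.1)).mp hL2_zero
  have hΩ_eq : ∀ᵐ x ∂(volume.restrict Ω), u x = v x := by
    filter_upwards [hsq_zero] with x hx
    exact sub_eq_zero.mp (mul_self_eq_zero.mp hx)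
  rw [ae_restrict_iff' hΩopen.measurableSet] at hΩ_eq
  filter_upwards [hΩ_eq, hu.1.2.1, hv.1.2.1] with x hx hux hvx
  by_cases hxΩ : x ∈ Ω
  · exact hx hxΩ
  · rw [hux hxΩ, hvx hxΩ]

/-- Uniqueness of the weak solution of the stationary problem `(S)`. -/
theorem statement_1
    {n : ℕ} {s : ℝ} (hs0 : 0 < s) (hs1 : s < 1) (hns : 2 * s < (n : ℝ))
    {Ω : Set (Eu n)} (hΩ : GoodDomain Ω)
    {q lam : ℝ} (hq : 0 < q) (hlam : 0 < lam)
    {g : Eu n → ℝ} (hg : MemLinfty Ω g)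
    {u v : Eu n → ℝ}
    (hu : IsWeakSolS s q lam Ω g u) (hv : IsWeakSolS s q lam Ω g v) :
    ∀ᵐ x : Eu n, u x = v x :=
  statement_1_general hs0 hs1 hΩ hq hlam hu hv
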